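/- Let G1 := x0^9 − x1^9 + x2^8·x3 + x3^8·x2 ∈ ℂ[x0, x1, x2, x3]. Then the only common zero in ℂ⁴ of the four partial derivatives ∂G1/∂x0, ∂G1/∂x1, ∂G1/∂x2, ∂G1/∂x3 is (0, 0, 0, 0). (Equivalently, the projective surface {G1 = 0} ⊂ ℙ³_ℂ is smooth.) -/
import Mathlib


open MvPolynomial

/-- The homogeneous degree-9 polynomial `G1 = x0⁹ − x1⁹ + x2⁸x3 + x3⁸x2`. -/
noncomputable def G1 : MvPolynomial (Fin 4) ℂ :=
  X 0 ^ 9 - X 1 ^ 9 + X 2 ^ 8 * X 3 + X 3 ^ 8 * X 2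

/-- The projective surface `{G1 = 0} ⊂ ℙ³_ℂ` is smooth: the only common zero in `ℂ⁴` of
the four partial derivatives of `G1` is the origin. -/
theorem stmt_12 (a : Fin 4 → ℂ) (h : ∀ i : Fin 4, eval a (pderiv i G1) = 0) :
    a = 0 := by
  have h0 := h 0
  have h1 := h 1
  have h2 := h 2
  have h3 := h 3
  simp only [G1, map_add, map_sub, map_mul, map_pow, pderiv_X, pderiv_pow,
    Derivation.leibniz, Derivation.leibniz_pow, smul_eq_mul,
    eval_add, eval_sub, eval_mul, eval_pow, eval_X, eval_C] at h0 h1 h2 h3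
  simp (config := { decide := true }) only [Pi.single_apply, if_true, if_false, reduceIte, eval_zero, mul_zero, zero_mul, add_zero, zero_add, sub_zero, zero_sub] at h0 h1 h2 h3
  norm_num at h0 h1 h2 h3
  have ha0 : a 0 = 0 := h0
  have ha1 : a 1 = 0 := h1
  have hkey : a 2 * (a 2 ^ 7 + 8 * a 3 ^ 7) = 0 := by linear_combination h3
  have ha3 : a 3 = 0 := by
    rcases mul_eq_zero.mp hkey with hu | hs
    · exact pow_eq_zero_iff (n := 8) (by norm_num) |>.mp
        (by linear_combination h2 - 8 * a 3 * a 2 ^ 6 * hu)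
    · exact pow_eq_zero_iff (n := 8) (by norm_num) |>.mp
        (by linear_combination (-1/63 : ℂ) * h2 + (8 * a 3 / 63) * hs)
  have ha2 : a 2 = 0 :=
    pow_eq_zero_iff (n := 8) (by norm_num) |>.mp
      (by linear_combination h3 - 8 * a 2 * a 3 ^ 6 * ha3)
  funext i
  fin_cases i <;> simpa using ‹_›
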